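/- arXiv:1908.06669 — 5 statements merged into one kernel-verified Lean document; each statement's English description precedes it below -/
import Mathlib

section
/- Let $\Phi$ be a real $m\times n$ matrix with no all-zero row and no all-zero column, $\xi_c=\max_{\alpha\in\{\pm1\}^m,\beta\in\{\pm1\}^n}\alpha^T\Phi\beta$, and suppose there exist diagonal matrices $\Sigma\succ0$, $\Lambda\succ0$ with $\tfrac12(\operatorname{tr}\Sigma+\operatorname{tr}\Lambda)=\xi_c$ and $\begin{pmatrix}\Sigma&-\Phi\\ -\Phi^T&\Lambda\end{pmatrix}\succeq 0$ (i.e., the dual SDP value equals the classical bias, meaning there is no quantum advantage). Then every pair of sign vectors $(\alpha,\beta)$ achieving $\alpha^T\Phi\beta=\xi_c$ satisfies $\beta=\Lambda^{-1}\Phi^T\alpha$, with the matrix $F=\Lambda^{-1}\Phi^T$ independent of the optimal pair chosen. -/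
open Matrix

/-! The dual certificate is positive semidefinite and, at an optimal sign pair `v = (α, β)`,
its quadratic form equals `tr Σ + tr Λ - 2 αᵀΦβ = 2 ξc - 2 ξc = 0`. A vector on which a
positive semidefinite form vanishes lies in its kernel, and the second block row of
`M v = 0` reads `Λ β = Φᵀ α`. -/

section

variable {ι m n R : Type*} [Fintype ι] [Fintype m] [Fintype n] [CommRing R]

lemma dotProduct_diagonal_mulVec_of_sign [DecidableEq ι] {α : ι → R}
    (hα : ∀ i, α i = 1 ∨ α i = -1) (d : ι → R) : α ⬝ᵥ diagonal d *ᵥ α = ∑ i, d i := by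
  simp only [dotProduct, mulVec_diagonal]
  refine Finset.sum_congr rfl fun i _ => ?_
  rcases hα i with h | h <;> rw [h] <;> ring

lemma dotProduct_mulVec_eq_sum_sum (α : m → R) (Φ : Matrix m n R) (β : n → R) :
    α ⬝ᵥ Φ *ᵥ β = ∑ x, ∑ y, α x * Φ x y * β y := by
  simp only [dotProduct, mulVec, Finset.mul_sum, mul_assoc]

lemma sumElim_dotProduct_fromBlocks_mulVec (A : Matrix m m R) (B : Matrix m n R)
    (C : Matrix n m R) (D : Matrix n n R) (α : m → R) (β : n → R) :
    Sum.elim α β ⬝ᵥ fromBlocks A B C D *ᵥ Sum.elim α β =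
      α ⬝ᵥ A *ᵥ α + α ⬝ᵥ B *ᵥ β + (β ⬝ᵥ C *ᵥ α + β ⬝ᵥ D *ᵥ β) := by
  rw [fromBlocks_mulVec, Sum.elim_comp_inl, Sum.elim_comp_inr, sumElim_dotProduct_sumElim,
    dotProduct_add, dotProduct_add]

lemma sumElim_dotProduct_dualCertificate_mulVec [DecidableEq m] [DecidableEq n]
    {α : m → R} {β : n → R}
    (hα : ∀ x, α x = 1 ∨ α x = -1) (hβ : ∀ y, β y = 1 ∨ β y = -1)
    (Φ : Matrix m n R) (σ : m → R) (lam : n → R) :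
    Sum.elim α β ⬝ᵥ fromBlocks (diagonal σ) (-Φ) (-Φᵀ) (diagonal lam) *ᵥ Sum.elim α β =
      ∑ x, σ x + ∑ y, lam y - 2 * (α ⬝ᵥ Φ *ᵥ β) := by
  rw [sumElim_dotProduct_fromBlocks_mulVec, dotProduct_diagonal_mulVec_of_sign hα,
    dotProduct_diagonal_mulVec_of_sign hβ, neg_mulVec, neg_mulVec, dotProduct_neg,
    dotProduct_neg, mulVec_transpose, dotProduct_comm β, ← dotProduct_mulVec]
  ring

lemma diagonal_mulVec_eq_transpose_mulVec_of_posSemidef [DecidableEq m] [DecidableEq n]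
    {Φ : Matrix m n ℝ} {σ : m → ℝ} {lam : n → ℝ}
    (hPSD : (fromBlocks (diagonal σ) (-Φ) (-Φᵀ) (diagonal lam)).PosSemidef)
    {α : m → ℝ} {β : n → ℝ} (hα : ∀ x, α x = 1 ∨ α x = -1) (hβ : ∀ y, β y = 1 ∨ β y = -1)
    (hopt : 2 * (α ⬝ᵥ Φ *ᵥ β) = ∑ x, σ x + ∑ y, lam y) :
    diagonal lam *ᵥ β = Φᵀ *ᵥ α := by
  have hker : fromBlocks (diagonal σ) (-Φ) (-Φᵀ) (diagonal lam) *ᵥ Sum.elim α β = 0 := by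
    refine (hPSD.dotProduct_mulVec_zero_iff _).mp ?_
    rw [star_trivial, sumElim_dotProduct_dualCertificate_mulVec hα hβ]
    linarith
  have hrow : -(Φᵀ *ᵥ α) + diagonal lam *ᵥ β = 0 := by
    simpa only [fromBlocks_mulVec, Sum.elim_comp_inl, Sum.elim_comp_inr, neg_mulVec,
      Pi.zero_comp] using congrArg (· ∘ Sum.inr) hker
  exact (neg_add_eq_zero.mp hrow).symm

end

lemma eq_inv_diagonal_mulVec {n K : Type*} [Fintype n] [DecidableEq n] [Field K]
    {d : n → K} (hd : ∀ i, d i ≠ 0) {β w : n → K} (h : diagonal d *ᵥ β = w) :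
    β = (diagonal d)⁻¹ *ᵥ w := by
  have hdet : IsUnit (diagonal d).det := by
    rw [det_diagonal, isUnit_iff_ne_zero]
    exact Finset.prod_ne_zero_iff.mpr fun i _ => hd i
  rw [← h, mulVec_mulVec, nonsing_inv_mul _ hdet, one_mulVec]

theorem stmt7_general (m n : ℕ) (Φ : Matrix (Fin m) (Fin n) ℝ)
    (ξc : ℝ)
    (σ : Fin m → ℝ) (lam : Fin n → ℝ)
    (hlam : ∀ y, 0 < lam y)
    (hval : (1 / 2) * ((∑ x, σ x) + ∑ y, lam y) = ξc)
    (hPSD : (Matrix.fromBlocks (Matrix.diagonal σ) (-Φ) (-Φᵀ)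
        (Matrix.diagonal lam)).PosSemidef) :
    ∀ α : Fin m → ℝ, ∀ β : Fin n → ℝ,
      (∀ x, α x = 1 ∨ α x = -1) → (∀ y, β y = 1 ∨ β y = -1) →
      (∑ x, ∑ y, α x * Φ x y * β y) = ξc →
      β = ((Matrix.diagonal lam)⁻¹ * Φᵀ).mulVec α := by
  intro α β hα hβ hopt
  rw [← mulVec_mulVec]
  refine eq_inv_diagonal_mulVec (fun y => (hlam y).ne') ?_
  refine diagonal_mulVec_eq_transpose_mulVec_of_posSemidef hPSD hα hβ ?_
  rw [dotProduct_mulVec_eq_sum_sum, hopt, ← hval]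
  ring

/-- No quantum advantage forces optimal classical strategies to be linearly
related: if an exhaustive XOR game matrix `Φ` admits a dual-feasible diagonal
pair `(Σ, Λ)` whose value `½(trΣ + trΛ)` equals the classical bias `ξc`, then
every optimal pair of sign vectors `(α, β)` satisfies `β = Λ⁻¹Φᵀα`. -/
theorem stmt7 (m n : ℕ) (Φ : Matrix (Fin m) (Fin n) ℝ)
    (hrow : ∀ x, ∃ y, Φ x y ≠ 0) (hcol : ∀ y, ∃ x, Φ x y ≠ 0)
    (ξc : ℝ)
    (hξc : IsGreatest {v : ℝ | ∃ α : Fin m → ℝ, ∃ β : Fin n → ℝ,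
        (∀ x, α x = 1 ∨ α x = -1) ∧ (∀ y, β y = 1 ∨ β y = -1) ∧
        v = ∑ x, ∑ y, α x * Φ x y * β y} ξc)
    (σ : Fin m → ℝ) (lam : Fin n → ℝ)
    (hσ : ∀ x, 0 < σ x) (hlam : ∀ y, 0 < lam y)
    (hval : (1 / 2) * ((∑ x, σ x) + ∑ y, lam y) = ξc)
    (hPSD : (Matrix.fromBlocks (Matrix.diagonal σ) (-Φ) (-Φᵀ)
        (Matrix.diagonal lam)).PosSemidef) :
    ∀ α : Fin m → ℝ, ∀ β : Fin n → ℝ,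
      (∀ x, α x = 1 ∨ α x = -1) → (∀ y, β y = 1 ∨ β y = -1) →
      (∑ x, ∑ y, α x * Φ x y * β y) = ξc →
      β = ((Matrix.diagonal lam)⁻¹ * Φᵀ).mulVec α :=
  stmt7_general m n Φ ξc σ lam hlam hval hPSD
end

section
/- The affine span of the set $\{\alpha\alpha^T : \alpha\in\{-1,+1\}^m\}$ inside the space of real symmetric $m\times m$ matrices is exactly the affine subspace of all real symmetric matrices with every diagonal entry equal to $1$; in particular its dimension is $m(m-1)/2$. -/
/-!
Write `J = 𝟙𝟙ᵀ` and let `σ_s` be the all-ones vector with the signs on `s` flipped. Every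
`ααᵀ` with `α ∈ {±1}^n` is symmetric with unit diagonal, so the affine span lies in
`J + W`, where `W` is the space of symmetric matrices with zero diagonal. Conversely, for
`i ≠ j` the direction `E_ij + E_ji` of `W` is `¼` of the combination
`(J - σ_iσ_iᵀ) + (σ_{ij}σ_{ij}ᵀ - σ_jσ_jᵀ)` of differences of points, and these directions
span `W` once `2` is invertible. Since `W` is coordinatised by the entries above the
diagonal, i.e. by the non-diagonal elements of `Sym2 n`, its dimension is `(#n).choose 2`.
-/

open Matrix

namespace Matrix

variable {n R : Type*}

def hollowSymmetric (R n : Type*) [Semiring R] : Submodule R (Matrix n n R) where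
  carrier := {M | M.IsSymm ∧ ∀ i, M i i = 0}
  add_mem' ha hb := ⟨ha.1.add hb.1, fun i => by simp [ha.2 i, hb.2 i]⟩
  zero_mem' := ⟨isSymm_zero, fun _ => rfl⟩
  smul_mem' c _ hM := ⟨hM.1.smul c, fun i => by simp [hM.2 i]⟩

theorem mem_hollowSymmetric [Semiring R] {M : Matrix n n R} :
    M ∈ hollowSymmetric R n ↔ M.IsSymm ∧ ∀ i, M i i = 0 :=
  Iff.rfl

def hollowSymmetricEquivSym2 [Semiring R] [DecidableEq n] :
    hollowSymmetric R n ≃ₗ[R] ({s : Sym2 n // ¬s.IsDiag} → R) where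
  toFun M s := Sym2.lift ⟨fun i j => (M : Matrix n n R) i j, fun i j => M.2.1.apply j i⟩ s
  map_add' _ _ := by
    funext ⟨s, _⟩
    induction s using Sym2.ind
    rfl
  map_smul' _ _ := by
    funext ⟨s, _⟩
    induction s using Sym2.ind
    rfl
  invFun f :=
    ⟨of fun i j => if h : i = j then 0 else f ⟨s(i, j), Sym2.mk_isDiag_iff.not.mpr h⟩,
      IsSymm.ext fun i j => by
        by_cases h : i = j
        · simp [h]
        · simp [h, Ne.symm h, Sym2.eq_swap],
      fun i => by simp⟩
  left_inv M := by
    ext i j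
    by_cases h : i = j
    · subst h; simp [M.2.2 i]
    · simp [h]
  right_inv f := by
    funext ⟨s, hs⟩
    induction s using Sym2.ind with
    | _ i j => simp [Sym2.mk_isDiag_iff.not.mp hs]

theorem finrank_hollowSymmetric [Fintype n] {K : Type*} [Field K] :
    Module.finrank K (hollowSymmetric K n) = (Fintype.card n).choose 2 := by
  classical
  rw [hollowSymmetricEquivSym2.finrank_eq, Module.finrank_fintype_fun_eq_card,
    Sym2.card_subtype_not_diag]

theorem hollowSymmetric_le_of_single_add_single_mem {K : Type*} [Field K] [Fintype n]
    [DecidableEq n] (h2 : (2 : K) ≠ 0)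
    {p : Submodule K (Matrix n n K)} (hp : ∀ i j, i ≠ j → single i j 1 + single j i 1 ∈ p) :
    hollowSymmetric K n ≤ p := by
  intro M hM
  have hsum : (2 : K) • M = ∑ i, ∑ j, M i j • (single i j 1 + single j i 1) := by
    ext a b
    simp [Matrix.sum_apply, single_apply, two_mul, Finset.sum_add_distrib, ite_and,
      hM.1.apply a b]
  rw [← Submodule.smul_mem_iff p h2, hsum]
  refine Submodule.sum_mem _ fun i _ => Submodule.sum_mem _ fun j _ => ?_
  by_cases hij : i = j
  · simp [hij, hM.2 j]
  · exact p.smul_mem _ (hp i j hij)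

def signOuterProducts (K n : Type*) [Ring K] : Set (Matrix n n K) :=
  {M | ∃ α : n → K, (∀ i, α i = 1 ∨ α i = -1) ∧ M = vecMulVec α α}

def flipSigns [Ring R] [DecidableEq n] (s : Finset n) : n → R :=
  fun k => if k ∈ s then -1 else 1

theorem vecMulVec_one_mem_signOuterProducts [Ring R] :
    vecMulVec 1 1 ∈ signOuterProducts R n :=
  ⟨1, fun _ => Or.inl rfl, rfl⟩

theorem vecMulVec_flipSigns_mem [Ring R] [DecidableEq n] (s : Finset n) :
    vecMulVec (flipSigns s) (flipSigns s) ∈ signOuterProducts R n :=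
  ⟨flipSigns s, fun k => by unfold flipSigns; split_ifs <;> simp, rfl⟩

theorem smul_four_single_add_single [Ring R] [DecidableEq n] {i j : n} (hij : i ≠ j) :
    (4 : R) • (single i j (1 : R) + single j i 1) =
      (vecMulVec 1 1 - vecMulVec (flipSigns {i}) (flipSigns {i})) +
        (vecMulVec (flipSigns {i, j}) (flipSigns {i, j}) -
          vecMulVec (flipSigns {j}) (flipSigns {j})) := by
  ext a b
  simp only [add_apply, sub_apply, smul_apply, vecMulVec_apply, single_apply, flipSigns,
    Finset.mem_singleton, Finset.mem_insert, Pi.one_apply, smul_eq_mul]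
  by_cases hai : a = i <;> by_cases haj : a = j <;> by_cases hbi : b = i <;>
    by_cases hbj : b = j <;> simp_all [eq_comm] <;> norm_num

theorem mem_mk'_vecMulVec_one_hollowSymmetric [CommRing R] {M : Matrix n n R} :
    M ∈ AffineSubspace.mk' (vecMulVec 1 1) (hollowSymmetric R n) ↔
      M.IsSymm ∧ ∀ i, M i i = 1 := by
  have hJ : (vecMulVec 1 1 : Matrix n n R).IsSymm := transpose_vecMulVec 1 1
  rw [AffineSubspace.mem_mk', vsub_eq_sub, mem_hollowSymmetric]
  refine and_congr ⟨fun h => by simpa using h.add hJ, fun h => h.sub hJ⟩ ?_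
  simp [sub_eq_zero]

theorem affineSpan_signOuterProducts_le [CommRing R] :
    affineSpan R (signOuterProducts R n) ≤
      AffineSubspace.mk' (vecMulVec 1 1) (hollowSymmetric R n) := by
  refine affineSpan_le.mpr ?_
  rintro _ ⟨α, hα, rfl⟩
  rw [SetLike.mem_coe, mem_mk'_vecMulVec_one_hollowSymmetric]
  refine ⟨transpose_vecMulVec α α, fun i => ?_⟩
  rw [vecMulVec_apply]
  rcases hα i with h | h <;> simp [h]

theorem single_add_single_mem_vectorSpan_signOuterProducts {K : Type*} [Field K]
    [DecidableEq n] (h2 : (2 : K) ≠ 0) {i j : n} (hij : i ≠ j) :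
    single i j 1 + single j i 1 ∈ vectorSpan K (signOuterProducts K n) := by
  have h4 : (4 : K) ≠ 0 := by
    rw [show (4 : K) = 2 * 2 by norm_num]
    exact mul_ne_zero h2 h2
  rw [← Submodule.smul_mem_iff _ h4, smul_four_single_add_single hij]
  exact add_mem
    (vsub_mem_vectorSpan K vecMulVec_one_mem_signOuterProducts (vecMulVec_flipSigns_mem _))
    (vsub_mem_vectorSpan K (vecMulVec_flipSigns_mem _) (vecMulVec_flipSigns_mem _))

theorem affineSpan_signOuterProducts {K : Type*} [Field K] [Fintype n] (h2 : (2 : K) ≠ 0) :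
    affineSpan K (signOuterProducts K n) =
      AffineSubspace.mk' (vecMulVec 1 1) (hollowSymmetric K n) := by
  classical
  have hle := affineSpan_signOuterProducts_le (R := K) (n := n)
  refine AffineSubspace.eq_of_direction_eq_of_nonempty_of_le ?_ ?_ hle
  · refine le_antisymm (by simpa using AffineSubspace.direction_le hle) ?_
    rw [AffineSubspace.direction_mk', direction_affineSpan]
    exact hollowSymmetric_le_of_single_add_single_mem h2 fun _ _ hij =>
      single_add_single_mem_vectorSpan_signOuterProducts h2 hij
  · exact ⟨_, subset_affineSpan K _ vecMulVec_one_mem_signOuterProducts⟩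

end Matrix

/-- The affine span of `{ααᵀ : α ∈ {±1}^m}` is exactly the set of real
symmetric matrices with unit diagonal; its dimension is `m(m-1)/2`. -/
theorem stmt8 (m : ℕ) :
    (affineSpan ℝ {M : Matrix (Fin m) (Fin m) ℝ |
        ∃ α : Fin m → ℝ, (∀ i, α i = 1 ∨ α i = -1) ∧ M = vecMulVec α α} : Set _)
      = {M : Matrix (Fin m) (Fin m) ℝ | M.IsSymm ∧ ∀ i, M i i = 1} ∧
    Module.finrank ℝ (affineSpan ℝ {M : Matrix (Fin m) (Fin m) ℝ |
        ∃ α : Fin m → ℝ, (∀ i, α i = 1 ∨ α i = -1) ∧ M = vecMulVec α α}).direction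
      = m * (m - 1) / 2 := by
  show (affineSpan ℝ (signOuterProducts ℝ (Fin m)) : Set (Matrix (Fin m) (Fin m) ℝ)) = _ ∧
    Module.finrank ℝ (affineSpan ℝ (signOuterProducts ℝ (Fin m))).direction = _
  rw [affineSpan_signOuterProducts two_ne_zero, AffineSubspace.direction_mk',
    finrank_hollowSymmetric, Fintype.card_fin, Nat.choose_two_right]
  exact ⟨Set.ext fun _ => mem_mk'_vecMulVec_one_hollowSymmetric, rfl⟩
end

section
/- Let $F$ be a fixed real $n\times m$ matrix with $m\le n$. Then the dimension of the affine span of the set $\{(\alpha, F\alpha, \alpha\alpha^T F^T) : \alpha\in\{-1,+1\}^m\}\subset \mathbb{R}^m\times\mathbb{R}^n\times\mathbb{R}^{m\times n}$ is at most $m + m(m-1)/2$. -/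
open Matrix

/-- Symmetric matrix with zero diagonal built from strictly-lower-triangle data. -/
def Smat (m : ℕ) (c : (Σ i : Fin m, Fin i.1) → ℝ) : Matrix (Fin m) (Fin m) ℝ :=
  fun a b =>
    if h : a.1 < b.1 then c ⟨b, ⟨a.1, h⟩⟩
    else if h' : b.1 < a.1 then c ⟨a, ⟨b.1, h'⟩⟩ else 0

lemma Smat_add (m : ℕ) (c d : (Σ i : Fin m, Fin i.1) → ℝ) :
    Smat m (c + d) = Smat m c + Smat m d := by
  ext a b
  simp only [Smat, Matrix.add_apply, Pi.add_apply]
  split_ifs <;> simp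

lemma Smat_smul (m : ℕ) (r : ℝ) (c : (Σ i : Fin m, Fin i.1) → ℝ) :
    Smat m (r • c) = r • Smat m c := by
  ext a b
  simp only [Smat, Matrix.smul_apply, Pi.smul_apply, smul_eq_mul]
  split_ifs <;> simp

/-- The linear parametrization map. -/
def Phi (m n : ℕ) (F : Matrix (Fin n) (Fin m) ℝ) :
    ((Fin m → ℝ) × ((Σ i : Fin m, Fin i.1) → ℝ)) →ₗ[ℝ]
      ((Fin m → ℝ) × (Fin n → ℝ) × Matrix (Fin m) (Fin n) ℝ) where
  toFun p := (p.1, F.mulVec p.1, Smat m p.2 * Fᵀ)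
  map_add' p q := by
    simp [Prod.ext_iff, Matrix.mulVec_add, Smat_add, Matrix.add_mul]
  map_smul' r p := by
    simp [Prod.ext_iff, Matrix.mulVec_smul, Smat_smul, Matrix.smul_mul]

lemma Smat_eq (m : ℕ) (α β : Fin m → ℝ) (hα : ∀ i, α i = 1 ∨ α i = -1)
    (hβ : ∀ i, β i = 1 ∨ β i = -1) :
    Smat m (fun x => α ⟨x.2.1, lt_trans x.2.2 x.1.2⟩ * α x.1
        - β ⟨x.2.1, lt_trans x.2.2 x.1.2⟩ * β x.1)
      = vecMulVec α α - vecMulVec β β := by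
  ext a b
  simp only [Smat, Matrix.sub_apply, vecMulVec_apply]
  rcases lt_trichotomy a.1 b.1 with h | h | h
  · rw [dif_pos h]
  · have hab : a = b := Fin.ext h
    rw [dif_neg (by omega), dif_neg (by omega)]
    subst hab
    rcases hα a with h1 | h1 <;> rcases hβ a with h2 | h2 <;> rw [h1, h2] <;> ring
  · rw [dif_neg (by omega), dif_pos h]
    ring

/-- The affine span of `{(α, Fα, ααᵀFᵀ) : α ∈ {±1}^m}` has dimension at most
`m + m(m-1)/2`. -/
theorem stmt9 (m n : ℕ) (hmn : m ≤ n) (F : Matrix (Fin n) (Fin m) ℝ) :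
    Module.finrank ℝ
      (affineSpan ℝ {p : (Fin m → ℝ) × (Fin n → ℝ) × Matrix (Fin m) (Fin n) ℝ |
        ∃ α : Fin m → ℝ, (∀ i, α i = 1 ∨ α i = -1) ∧
          p = (α, F.mulVec α, vecMulVec α α * Fᵀ)}).direction
      ≤ m + m * (m - 1) / 2 := by
  rw [direction_affineSpan, vectorSpan_def]
  have hle : Submodule.span ℝ
      ({p : (Fin m → ℝ) × (Fin n → ℝ) × Matrix (Fin m) (Fin n) ℝ |
        ∃ α : Fin m → ℝ, (∀ i, α i = 1 ∨ α i = -1) ∧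
          p = (α, F.mulVec α, vecMulVec α α * Fᵀ)} -ᵥ
       {p : (Fin m → ℝ) × (Fin n → ℝ) × Matrix (Fin m) (Fin n) ℝ |
        ∃ α : Fin m → ℝ, (∀ i, α i = 1 ∨ α i = -1) ∧
          p = (α, F.mulVec α, vecMulVec α α * Fᵀ)})
      ≤ LinearMap.range (Phi m n F) := by
    rw [Submodule.span_le]
    rintro v ⟨p, hp, q, hq, rfl⟩
    obtain ⟨α, hα, rfl⟩ := hp
    obtain ⟨β, hβ, rfl⟩ := hq
    refine ⟨(α - β, fun x => α ⟨x.2.1, lt_trans x.2.2 x.1.2⟩ * α x.1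
        - β ⟨x.2.1, lt_trans x.2.2 x.1.2⟩ * β x.1), ?_⟩
    simp only [Phi, LinearMap.coe_mk, AddHom.coe_mk]
    rw [Smat_eq m α β hα hβ]
    ext <;>
      simp [Prod.ext_iff, Matrix.mulVec_sub, Matrix.sub_mul, vsub_eq_sub, Prod.sub_def]
  calc Module.finrank ℝ _ ≤ Module.finrank ℝ (LinearMap.range (Phi m n F)) :=
        Submodule.finrank_mono hle
    _ ≤ Module.finrank ℝ ((Fin m → ℝ) × ((Σ i : Fin m, Fin i.1) → ℝ)) :=
        LinearMap.finrank_range_le _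
    _ = m + m * (m - 1) / 2 := by
        rw [Module.finrank_prod, Module.finrank_pi, Module.finrank_pi]
        congr 1
        · simp
        · rw [Fintype.card_sigma]
          simp only [Fintype.card_fin]
          rw [Fin.sum_univ_eq_sum_range (fun i => i) m, Finset.sum_range_id]
end

section
/- Let $\Phi$ be a real symmetric $m\times m$ matrix possessing an eigenvector $u\in\{-1,+1\}^m$ whose eigenvalue $\lambda$ satisfies $|\lambda|=\|\Phi\|$ (operator norm). Then $\max_{\alpha,\beta\in\{\pm1\}^m}\alpha^T\Phi\beta = m\,\|\Phi\|$, and moreover for any unit vectors $a_1,\dots,a_m,b_1,\dots,b_m$ in any real inner product space, $\sum_{x,y}\Phi_{xy}\langle a_x,b_y\rangle\le m\,\|\Phi\|$. Hence the quantum bias equals the classical bias: XOR games with such game matrices (in particular, all NLC games) have no quantum advantage. -/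
/-!
Write `‖Φ‖` for the operator norm. Since `‖Φ‖² • 1 - Φᵀ Φ` is positive semidefinite, pairing it
entrywise with the Gram matrix of `b` (Schur product theorem) gives
`∑ₓ ‖∑ᵧ Φₓᵧ bᵧ‖² ≤ ‖Φ‖² ∑ᵧ ‖bᵧ‖²`. Cauchy–Schwarz then bounds every vector strategy by
`m ‖Φ‖`; the sign strategies are the special case `E = ℝ`. Conversely, if `Φ u = λ u` with
`u ∈ {±1}ᵐ`, the strategy `α = sign(λ) u`, `β = u` has bias `|λ| (u ⬝ᵥ u) = m |λ| = m ‖Φ‖`.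
-/

open Matrix Finset
open scoped InnerProductSpace

section VectorStrategies

variable {ι κ E : Type*} [Fintype ι] [NormedAddCommGroup E] [InnerProductSpace ℝ E]

theorem Matrix.PosSemidef.sum_mul_inner_nonneg {P : Matrix ι ι ℝ} (hP : P.PosSemidef)
    (b : ι → E) : 0 ≤ ∑ i, ∑ j, P i j * ⟪b i, b j⟫_ℝ := by
  have h := (hP.hadamard (posSemidef_gram ℝ b)).dotProduct_mulVec_nonneg fun _ ↦ 1
  simpa only [dotProduct, mulVec, hadamard_apply, gram_apply, star_trivial, mul_one,
    one_mul] using h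

theorem sum_norm_sum_smul_sq [Fintype κ] (R : Matrix κ ι ℝ) (b : ι → E) :
    ∑ k, ‖∑ i, R k i • b i‖ ^ 2 = ∑ i, ∑ j, (Rᵀ * R) i j * ⟪b i, b j⟫_ℝ := by
  simp only [← real_inner_self_eq_norm_sq, sum_inner, inner_sum, real_inner_smul_left,
    real_inner_smul_right, mul_apply, transpose_apply, Finset.sum_mul]
  rw [Finset.sum_comm]
  refine Finset.sum_congr rfl fun i _ ↦ ?_
  rw [Finset.sum_comm]
  exact Finset.sum_congr rfl fun j _ ↦ Finset.sum_congr rfl fun k _ ↦ by rw [real_inner_comm]; ring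

variable [DecidableEq ι]

theorem Matrix.gram_toEuclideanCLM_basisFun (Φ : Matrix ι ι ℝ) :
    gram ℝ (toEuclideanCLM (𝕜 := ℝ) Φ ∘ EuclideanSpace.basisFun ι ℝ) = Φᵀ * Φ := by
  ext i j
  simp [EuclideanSpace.inner_eq_star_dotProduct, mul_apply, dotProduct, mul_comm]

theorem Matrix.posSemidef_opNorm_sq_smul_one_sub_transpose_mul_self (Φ : Matrix ι ι ℝ) :
    (‖toEuclideanCLM (𝕜 := ℝ) Φ‖ ^ 2 • (1 : Matrix ι ι ℝ) - Φᵀ * Φ).PosSemidef := by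
  have h := posSemidef_opNorm_smul_gram_sub_gram (EuclideanSpace.basisFun ι ℝ)
    (toEuclideanCLM (𝕜 := ℝ) Φ)
  rwa [gram_toEuclideanCLM_basisFun,
    gram_eq_one_iff_orthonormal.mpr (EuclideanSpace.basisFun ι ℝ).orthonormal] at h

theorem sum_norm_sum_smul_sq_le (Φ : Matrix ι ι ℝ) (b : ι → E) :
    ∑ k, ‖∑ i, Φ k i • b i‖ ^ 2 ≤ ‖toEuclideanCLM (𝕜 := ℝ) Φ‖ ^ 2 * ∑ i, ‖b i‖ ^ 2 := by
  have h := (posSemidef_opNorm_sq_smul_one_sub_transpose_mul_self Φ).sum_mul_inner_nonneg b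
  have hdiag : ∑ i, ∑ j, (‖toEuclideanCLM (𝕜 := ℝ) Φ‖ ^ 2 • (1 : Matrix ι ι ℝ)) i j
      * ⟪b i, b j⟫_ℝ = ‖toEuclideanCLM (𝕜 := ℝ) Φ‖ ^ 2 * ∑ i, ‖b i‖ ^ 2 := by
    simp [one_apply, Finset.mul_sum]
  simp only [Matrix.sub_apply, sub_mul, Finset.sum_sub_distrib, hdiag, sub_nonneg] at h
  rwa [sum_norm_sum_smul_sq]

theorem sum_mul_inner_le (Φ : Matrix ι ι ℝ) (a b : ι → E) :
    ∑ k, ∑ i, Φ k i * ⟪a k, b i⟫_ℝ ≤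
      ‖toEuclideanCLM (𝕜 := ℝ) Φ‖ * √(∑ k, ‖a k‖ ^ 2) * √(∑ i, ‖b i‖ ^ 2) := by
  set N := ‖toEuclideanCLM (𝕜 := ℝ) Φ‖
  have hc : √(∑ k, ‖∑ i, Φ k i • b i‖ ^ 2) ≤ N * √(∑ i, ‖b i‖ ^ 2) :=
    calc _ ≤ √(N ^ 2 * ∑ i, ‖b i‖ ^ 2) := Real.sqrt_le_sqrt (sum_norm_sum_smul_sq_le Φ b)
      _ = N * √(∑ i, ‖b i‖ ^ 2) := by
        rw [Real.sqrt_mul (sq_nonneg N), Real.sqrt_sq (norm_nonneg _)]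
  calc ∑ k, ∑ i, Φ k i * ⟪a k, b i⟫_ℝ = ∑ k, ⟪a k, ∑ i, Φ k i • b i⟫_ℝ := by
        simp only [inner_sum, real_inner_smul_right]
    _ ≤ ∑ k, ‖a k‖ * ‖∑ i, Φ k i • b i‖ := sum_le_sum fun k _ ↦ real_inner_le_norm _ _
    _ ≤ √(∑ k, ‖a k‖ ^ 2) * √(∑ k, ‖∑ i, Φ k i • b i‖ ^ 2) :=
        Real.sum_mul_le_sqrt_mul_sqrt _ _ _
    _ ≤ √(∑ k, ‖a k‖ ^ 2) * (N * √(∑ i, ‖b i‖ ^ 2)) := by gcongr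
    _ = N * √(∑ k, ‖a k‖ ^ 2) * √(∑ i, ‖b i‖ ^ 2) := by ring

theorem sum_mul_inner_le_card_mul_opNorm (Φ : Matrix ι ι ℝ) {a b : ι → E}
    (ha : ∀ k, ‖a k‖ = 1) (hb : ∀ i, ‖b i‖ = 1) :
    ∑ k, ∑ i, Φ k i * ⟪a k, b i⟫_ℝ ≤ Fintype.card ι * ‖toEuclideanCLM (𝕜 := ℝ) Φ‖ := by
  have h := sum_mul_inner_le Φ a b
  simp only [ha, hb, one_pow, sum_const, card_univ, nsmul_eq_mul, mul_one] at h
  rwa [mul_assoc, Real.mul_self_sqrt (Nat.cast_nonneg _), mul_comm] at h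

end VectorStrategies

section SignStrategies

variable {ι : Type*} [Fintype ι]

theorem sum_mul_mul_eq_dotProduct_mulVec (Φ : Matrix ι ι ℝ) (α β : ι → ℝ) :
    ∑ x, ∑ y, α x * Φ x y * β y = α ⬝ᵥ Φ *ᵥ β := by
  simp only [dotProduct, mulVec, Finset.mul_sum, mul_assoc]

theorem dotProduct_self_eq_card_of_sign {u : ι → ℝ} (hu : ∀ i, u i = 1 ∨ u i = -1) :
    u ⬝ᵥ u = Fintype.card ι := by
  have hsq : ∀ i, u i * u i = 1 := fun i ↦ by rcases hu i with h | h <;> simp [h]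
  simp [dotProduct, hsq]

theorem exists_sign_dotProduct_mulVec_eq {Φ : Matrix ι ι ℝ} {u : ι → ℝ}
    (hu : ∀ i, u i = 1 ∨ u i = -1) {lam : ℝ} (heig : Φ *ᵥ u = lam • u) :
    ∃ α : ι → ℝ, (∀ x, α x = 1 ∨ α x = -1) ∧ α ⬝ᵥ Φ *ᵥ u = Fintype.card ι * |lam| := by
  obtain ⟨ε, hε, hεlam⟩ : ∃ ε : ℝ, (ε = 1 ∨ ε = -1) ∧ ε * lam = |lam| := by
    rcases abs_choice lam with h | h
    exacts [⟨1, .inl rfl, by simp [h]⟩, ⟨-1, .inr rfl, by simp [h]⟩]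
  refine ⟨ε • u, fun x ↦ ?_, ?_⟩
  · rcases hε with rfl | rfl <;> rcases hu x with h | h <;> simp [h]
  · rw [heig, smul_dotProduct, dotProduct_smul, dotProduct_self_eq_card_of_sign hu, smul_eq_mul,
      smul_eq_mul, ← hεlam]
    ring

end SignStrategies

theorem stmt14_general (m : ℕ) (Φ : Matrix (Fin m) (Fin m) ℝ)
    (u : Fin m → ℝ) (hu : ∀ i, u i = 1 ∨ u i = -1) (lam : ℝ)
    (heig : Φ.mulVec u = lam • u)
    (hnorm : |lam| = ‖Matrix.toEuclideanCLM (𝕜 := ℝ) Φ‖) :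
    IsGreatest {v : ℝ | ∃ α β : Fin m → ℝ,
        (∀ x, α x = 1 ∨ α x = -1) ∧ (∀ y, β y = 1 ∨ β y = -1) ∧
        v = ∑ x, ∑ y, α x * Φ x y * β y}
      ((m : ℝ) * ‖Matrix.toEuclideanCLM (𝕜 := ℝ) Φ‖) ∧
    ∀ (E : Type) [inst : NormedAddCommGroup E] [inst2 : InnerProductSpace ℝ E]
      (a b : Fin m → E), (∀ x, ‖a x‖ = 1) → (∀ y, ‖b y‖ = 1) →
      (∑ x, ∑ y, Φ x y * inner ℝ (a x) (b y)) ≤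
        (m : ℝ) * ‖Matrix.toEuclideanCLM (𝕜 := ℝ) Φ‖ := by
  have hquantum : ∀ (E : Type) [NormedAddCommGroup E] [InnerProductSpace ℝ E]
      (a b : Fin m → E), (∀ x, ‖a x‖ = 1) → (∀ y, ‖b y‖ = 1) →
      (∑ x, ∑ y, Φ x y * inner ℝ (a x) (b y)) ≤ (m : ℝ) * ‖toEuclideanCLM (𝕜 := ℝ) Φ‖ :=
    fun E _ _ a b ha hb ↦ by simpa using sum_mul_inner_le_card_mul_opNorm Φ ha hb
  refine ⟨⟨?_, ?_⟩, hquantum⟩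
  · obtain ⟨α, hα, hval⟩ := exists_sign_dotProduct_mulVec_eq hu heig
    refine ⟨α, u, hα, hu, ?_⟩
    rw [sum_mul_mul_eq_dotProduct_mulVec, hval, hnorm, Fintype.card_fin]
  · rintro v ⟨α, β, hα, hβ, rfl⟩
    have hunit : ∀ γ : Fin m → ℝ, (∀ x, γ x = 1 ∨ γ x = -1) → ∀ x, ‖γ x‖ = 1 :=
      fun γ hγ x ↦ by rcases hγ x with h | h <;> simp [h]
    have h := hquantum ℝ α β (hunit α hα) (hunit β hβ)
    simp only [Real.inner_apply] at h
    convert h using 3 with x _ y _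
    ring

/-- XOR games whose symmetric game matrix has a `±1` eigenvector for an
eigenvalue of maximal modulus have no quantum advantage: the classical bias
equals `m‖Φ‖` and every vector (quantum) strategy is bounded by `m‖Φ‖`. -/
theorem stmt14 (m : ℕ) (Φ : Matrix (Fin m) (Fin m) ℝ) (hΦ : Φ.IsSymm)
    (u : Fin m → ℝ) (hu : ∀ i, u i = 1 ∨ u i = -1) (lam : ℝ)
    (heig : Φ.mulVec u = lam • u)
    (hnorm : |lam| = ‖Matrix.toEuclideanCLM (𝕜 := ℝ) Φ‖) :
    IsGreatest {v : ℝ | ∃ α β : Fin m → ℝ,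
        (∀ x, α x = 1 ∨ α x = -1) ∧ (∀ y, β y = 1 ∨ β y = -1) ∧
        v = ∑ x, ∑ y, α x * Φ x y * β y}
      ((m : ℝ) * ‖Matrix.toEuclideanCLM (𝕜 := ℝ) Φ‖) ∧
    ∀ (E : Type) [inst : NormedAddCommGroup E] [inst2 : InnerProductSpace ℝ E]
      (a b : Fin m → E), (∀ x, ‖a x‖ = 1) → (∀ y, ‖b y‖ = 1) →
      (∑ x, ∑ y, Φ x y * inner ℝ (a x) (b y)) ≤
        (m : ℝ) * ‖Matrix.toEuclideanCLM (𝕜 := ℝ) Φ‖ :=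
  stmt14_general m Φ u hu lam heig hnorm
end

section
/- Let $\Phi$ be a real symmetric $m\times m$ matrix with operator norm $\lambda=\|\Phi\|>0$, and suppose every sign vector $\alpha\in\{\pm1\}^m$ achieving $\max_{\alpha,\beta}\alpha^T\Phi\beta=m\lambda$ (jointly with some $\beta$) lies in $\operatorname{Eig}(\lambda)\cup\operatorname{Eig}(-\lambda)$, with $\beta=\alpha$ if $\alpha\in\operatorname{Eig}(\lambda)$ and $\beta=-\alpha$ if $\alpha\in\operatorname{Eig}(-\lambda)$. If $k=\dim\operatorname{Eig}(\lambda)$ and $\ell=\dim\operatorname{Eig}(-\lambda)$, then the dimension of the affine span of the optimal points $\{(\alpha,\epsilon\alpha,\epsilon\alpha\alpha^T)\}$ is at most $k+\ell+\frac{k(k+1)}{2}+\frac{\ell(\ell+1)}{2}-1$. -/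
open Matrix Module

/-!
An optimal point is `(a, εa, ε aaᵀ)` with `ε = ±1` and `a ∈ Eig(ελ)`, so it lies in the span of
the vectors `(a, εa, 0)` and `(0, 0, aaᵀ)` with `a ∈ Eig(ελ)`. The matrices `aaᵀ` span a space of
dimension at most `k(k+1)/2`, being combinations of the symmetrised products `eᵢeⱼᵀ + eⱼeᵢᵀ` of a
basis. Finally all optimal points lie on the hyperplane `tr(Φᵀ M) = mλ`, which misses the origin
because `mλ ≠ 0`, so their affine span has one dimension less than their linear span.
-/

theorem two_smul_vecMulVec_sum_self {R n ι : Type*} [CommSemiring R] [Fintype ι]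
    (e : ι → n → R) (c : ι → R) :
    (2 : R) • vecMulVec (∑ i, c i • e i) (∑ i, c i • e i)
      = ∑ i, ∑ j, (c i * c j) • (vecMulVec (e i) (e j) + vecMulVec (e j) (e i)) := by
  have hswap : ∑ i, ∑ j, (c i * c j) • vecMulVec (e j) (e i)
      = ∑ i, ∑ j, (c i * c j) • vecMulVec (e i) (e j) := by
    rw [Finset.sum_comm]
    exact Finset.sum_congr rfl fun i _ => Finset.sum_congr rfl fun j _ => by rw [mul_comm]
  simp_rw [smul_add, Finset.sum_add_distrib, hswap, ← two_smul R]
  congr 1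
  ext x y
  simp only [vecMulVec_apply, Finset.sum_apply, Pi.smul_apply, smul_eq_mul, Finset.sum_mul_sum,
    Matrix.sum_apply, Matrix.smul_apply]
  exact Finset.sum_congr rfl fun i _ => Finset.sum_congr rfl fun j _ => by ring

theorem finrank_span_vecMulVec_self_le {K n : Type*} [Field K] [Fintype n] [NeZero (2 : K)]
    (E : Submodule K (n → K)) :
    finrank K (Submodule.span K ((fun a => vecMulVec a a) '' (E : Set (n → K))))
      ≤ finrank K E * (finrank K E + 1) / 2 := by
  set k := finrank K E
  let b := Module.finBasis K E
  let sym : Sym2 (Fin k) → Matrix n n K :=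
    Sym2.lift ⟨fun i j => vecMulVec (b i : n → K) (b j) + vecMulVec (b j : n → K) (b i),
      fun _ _ => add_comm _ _⟩
  have hle : Submodule.span K ((fun a => vecMulVec a a) '' (E : Set (n → K)))
      ≤ Submodule.span K (Set.range sym) := by
    refine Submodule.span_le.mpr ?_
    rintro _ ⟨a, ha, rfl⟩
    have ha' : a = ∑ i, b.repr ⟨a, ha⟩ i • (b i : n → K) := by
      have := congrArg Subtype.val (b.sum_repr ⟨a, ha⟩)
      rw [Submodule.coe_sum] at this
      simpa using this.symm
    refine (Submodule.smul_mem_iff _ (two_ne_zero (α := K))).mp ?_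
    rw [ha', two_smul_vecMulVec_sum_self]
    exact Submodule.sum_mem _ fun i _ => Submodule.sum_mem _ fun j _ =>
      Submodule.smul_mem _ _ (Submodule.subset_span ⟨s(i, j), rfl⟩)
  calc finrank K (Submodule.span K ((fun a => vecMulVec a a) '' (E : Set (n → K))))
      ≤ finrank K (Submodule.span K (Set.range sym)) := Submodule.finrank_mono hle
    _ ≤ Fintype.card (Sym2 (Fin k)) := finrank_range_le_card sym
    _ = k * (k + 1) / 2 := by
      rw [Sym2.card, Fintype.card_fin, Nat.choose_two_right, Nat.add_sub_cancel, Nat.mul_comm]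

theorem finrank_vectorSpan_le_finrank_sub_one_of_map_eq {K V : Type*} [Field K] [AddCommGroup V]
    [Module K V] {S : Set V} {W : Submodule K V} [FiniteDimensional K W] (f : V →ₗ[K] K)
    {c : K} (hc : c ≠ 0) (hSW : S ⊆ W) (hf : ∀ p ∈ S, f p = c) :
    finrank K (vectorSpan K S) ≤ finrank K W - 1 := by
  rcases S.eq_empty_or_nonempty with rfl | ⟨p₀, hp₀⟩
  · rw [vectorSpan_empty, finrank_bot]
    exact Nat.zero_le _
  have hle : vectorSpan K S ≤ W ⊓ LinearMap.ker f := by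
    rw [vectorSpan_def, Submodule.span_le]
    rintro _ ⟨p, hp, q, hq, rfl⟩
    exact ⟨W.sub_mem (hSW hp) (hSW hq), by simp [hf p hp, hf q hq]⟩
  have hlt : W ⊓ LinearMap.ker f < W := by
    refine inf_le_left.lt_of_ne fun h => hc ?_
    have hp₀ker : p₀ ∈ W ⊓ LinearMap.ker f := by
      rw [h]
      exact hSW hp₀
    rw [← hf p₀ hp₀]
    exact hp₀ker.2
  exact Nat.le_sub_one_of_lt <|
    (Submodule.finrank_mono hle).trans_lt (Submodule.finrank_lt_finrank_of_lt hlt)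

theorem trace_transpose_mul_vecMulVec {R n : Type*} [CommSemiring R] [Fintype n]
    (Φ : Matrix n n R) (α β : n → R) :
    trace (Φᵀ * vecMulVec α β) = ∑ x, ∑ y, α x * Φ x y * β y := by
  simp only [trace, diag_apply, mul_apply, transpose_apply, vecMulVec_apply]
  rw [Finset.sum_comm]
  exact Finset.sum_congr rfl fun x _ => Finset.sum_congr rfl fun y _ => by ring

section SignedPoints

variable {K n : Type*} [Field K]

def signedPointSpan (ε : K) (E : Submodule K (n → K)) :
    Submodule K ((n → K) × (n → K) × Matrix n n K) :=
  Submodule.span K ((fun a => (a, ε • a, vecMulVec a (ε • a))) '' (E : Set (n → K)))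

theorem mem_signedPointSpan {ε : K} {E : Submodule K (n → K)} {a : n → K} (ha : a ∈ E) :
    (a, ε • a, vecMulVec a (ε • a)) ∈ signedPointSpan ε E :=
  Submodule.subset_span ⟨a, ha, rfl⟩

theorem finrank_signedPointSpan_le [Fintype n] [NeZero (2 : K)] (ε : K)
    (E : Submodule K (n → K)) :
    finrank K (signedPointSpan ε E) ≤ finrank K E + finrank K E * (finrank K E + 1) / 2 := by
  let vecPart : (n → K) →ₗ[K] (n → K) × (n → K) × Matrix n n K :=
    LinearMap.id.prod ((ε • LinearMap.id).prod 0)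
  let matPart : Matrix n n K →ₗ[K] (n → K) × (n → K) × Matrix n n K :=
    LinearMap.inr K _ _ ∘ₗ LinearMap.inr K _ _
  let squares := Submodule.span K ((fun a => vecMulVec a a) '' (E : Set (n → K)))
  have hle : signedPointSpan ε E ≤ E.map vecPart ⊔ squares.map matPart := by
    refine Submodule.span_le.mpr ?_
    rintro _ ⟨a, ha, rfl⟩
    have hsplit : (a, ε • a, vecMulVec a (ε • a)) = vecPart a + matPart (ε • vecMulVec a a) := by
      simp [vecPart, matPart, vecMulVec_smul]
    dsimp only
    rw [SetLike.mem_coe, hsplit]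
    exact Submodule.add_mem _ (Submodule.mem_sup_left (Submodule.mem_map_of_mem ha))
      (Submodule.mem_sup_right (Submodule.mem_map_of_mem
        (Submodule.smul_mem _ _ (Submodule.subset_span ⟨a, ha, rfl⟩))))
  calc finrank K (signedPointSpan ε E)
      ≤ finrank K (E.map vecPart ⊔ squares.map matPart : Submodule K _) :=
        Submodule.finrank_mono hle
    _ ≤ finrank K (E.map vecPart) + finrank K (squares.map matPart) :=
        Submodule.finrank_add_le_finrank_add_finrank _ _
    _ ≤ finrank K E + finrank K squares :=
        add_le_add (Submodule.finrank_map_le _ _) (Submodule.finrank_map_le _ _)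
    _ ≤ finrank K E + finrank K E * (finrank K E + 1) / 2 :=
        Nat.add_le_add_left (finrank_span_vecMulVec_self_le E) _

end SignedPoints

theorem stmt15_general (m : ℕ) (Φ : Matrix (Fin m) (Fin m) ℝ)
    (lam : ℝ) (hpos : 0 < lam)
    (hopt : ∀ α β : Fin m → ℝ,
      (∀ x, α x = 1 ∨ α x = -1) → (∀ y, β y = 1 ∨ β y = -1) →
      (∑ x, ∑ y, α x * Φ x y * β y) = (m : ℝ) * lam →
      (Φ.mulVec α = lam • α ∧ β = α) ∨ (Φ.mulVec α = (-lam) • α ∧ β = -α)) :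
    Module.finrank ℝ
      (affineSpan ℝ {p : (Fin m → ℝ) × (Fin m → ℝ) × Matrix (Fin m) (Fin m) ℝ |
        ∃ α β : Fin m → ℝ,
          (∀ x, α x = 1 ∨ α x = -1) ∧ (∀ y, β y = 1 ∨ β y = -1) ∧
          (∑ x, ∑ y, α x * Φ x y * β y) = (m : ℝ) * lam ∧
          p = (α, β, vecMulVec α β)}).direction
      ≤ Module.finrank ℝ (Module.End.eigenspace (Matrix.toLin' Φ) lam)
        + Module.finrank ℝ (Module.End.eigenspace (Matrix.toLin' Φ) (-lam))
        + Module.finrank ℝ (Module.End.eigenspace (Matrix.toLin' Φ) lam) *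
            (Module.finrank ℝ (Module.End.eigenspace (Matrix.toLin' Φ) lam) + 1) / 2
        + Module.finrank ℝ (Module.End.eigenspace (Matrix.toLin' Φ) (-lam)) *
            (Module.finrank ℝ (Module.End.eigenspace (Matrix.toLin' Φ) (-lam)) + 1) / 2
        - 1 := by
  rcases Nat.eq_zero_or_pos m with rfl | hm
  · simp [Module.finrank_zero_of_subsingleton]
  set Eplus := Module.End.eigenspace (Matrix.toLin' Φ) lam
  set Eminus := Module.End.eigenspace (Matrix.toLin' Φ) (-lam)
  let payoff : (Fin m → ℝ) × (Fin m → ℝ) × Matrix (Fin m) (Fin m) ℝ →ₗ[ℝ] ℝ :=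
    traceLinearMap (Fin m) ℝ ℝ ∘ₗ LinearMap.mulLeft ℝ Φᵀ ∘ₗ LinearMap.snd ℝ _ _ ∘ₗ
      LinearMap.snd ℝ _ _
  rw [direction_affineSpan]
  refine (finrank_vectorSpan_le_finrank_sub_one_of_map_eq (W := signedPointSpan 1 Eplus ⊔
    signedPointSpan (-1) Eminus) payoff (c := m * lam) (by positivity) ?_ ?_).trans ?_
  · rintro _ ⟨α, β, hα, hβ, hval, rfl⟩
    rcases hopt α β hα hβ hval with ⟨heig, rfl⟩ | ⟨heig, rfl⟩
    · refine Submodule.mem_sup_left ?_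
      simpa using mem_signedPointSpan (ε := (1 : ℝ))
        (Module.End.mem_eigenspace_iff.mpr ((toLin'_apply Φ β).trans heig))
    · refine Submodule.mem_sup_right ?_
      simpa using mem_signedPointSpan (ε := (-1 : ℝ))
        (Module.End.mem_eigenspace_iff.mpr ((toLin'_apply Φ α).trans heig))
  · rintro _ ⟨α, β, -, -, hval, rfl⟩
    simpa [payoff, trace_transpose_mul_vecMulVec] using hval
  · refine Nat.sub_le_sub_right ((Submodule.finrank_add_le_finrank_add_finrank _ _).trans ?_) 1
    have := finrank_signedPointSpan_le 1 Eplus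
    have := finrank_signedPointSpan_le (-1) Eminus
    omega

/-- Dimension bound for the face of optimal classical strategies of an
NLC-type XOR game: if every optimal sign pair `(α, β)` satisfies
`α ∈ Eig(λ), β = α` or `α ∈ Eig(-λ), β = -α`, then the affine span of the
optimal points `(α, β, αβᵀ)` has dimension at most
`k + ℓ + k(k+1)/2 + ℓ(ℓ+1)/2 - 1`, where `k = dim Eig(λ)`,
`ℓ = dim Eig(-λ)`. -/
theorem stmt15 (m : ℕ) (Φ : Matrix (Fin m) (Fin m) ℝ) (hΦ : Φ.IsSymm)
    (lam : ℝ) (hlam : lam = ‖Matrix.toEuclideanCLM (𝕜 := ℝ) Φ‖) (hpos : 0 < lam)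
    (hopt : ∀ α β : Fin m → ℝ,
      (∀ x, α x = 1 ∨ α x = -1) → (∀ y, β y = 1 ∨ β y = -1) →
      (∑ x, ∑ y, α x * Φ x y * β y) = (m : ℝ) * lam →
      (Φ.mulVec α = lam • α ∧ β = α) ∨ (Φ.mulVec α = (-lam) • α ∧ β = -α)) :
    Module.finrank ℝ
      (affineSpan ℝ {p : (Fin m → ℝ) × (Fin m → ℝ) × Matrix (Fin m) (Fin m) ℝ |
        ∃ α β : Fin m → ℝ,
          (∀ x, α x = 1 ∨ α x = -1) ∧ (∀ y, β y = 1 ∨ β y = -1) ∧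
          (∑ x, ∑ y, α x * Φ x y * β y) = (m : ℝ) * lam ∧
          p = (α, β, vecMulVec α β)}).direction
      ≤ Module.finrank ℝ (Module.End.eigenspace (Matrix.toLin' Φ) lam)
        + Module.finrank ℝ (Module.End.eigenspace (Matrix.toLin' Φ) (-lam))
        + Module.finrank ℝ (Module.End.eigenspace (Matrix.toLin' Φ) lam) *
            (Module.finrank ℝ (Module.End.eigenspace (Matrix.toLin' Φ) lam) + 1) / 2
        + Module.finrank ℝ (Module.End.eigenspace (Matrix.toLin' Φ) (-lam)) *
            (Module.finrank ℝ (Module.End.eigenspace (Matrix.toLin' Φ) (-lam)) + 1) / 2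
        - 1 :=
  stmt15_general m Φ lam hpos hopt
end
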